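/- Let (A,B) be a pair of complex q×q matrices with the column space of A contained in that of A+B and the null space of A+B contained in that of A (and similarly by symmetry for B). Then the Moore-Penrose inverse of the parallel sum satisfies (A : B)^† = P (A^† + B^†) Q, where P is the orthogonal projection onto ran(A*) ∩ ran(B*) and Q is the orthogonal projection onto ran(A) ∩ ran(B). -/

import Mathlib

/-!
Write `S = A + B` and `M = A S† B`. From `ran A ⊆ ran S` and `ker S ⊆ ker A` we get
`S S† A = A = A S† S`, which makes the parallel sum symmetric: `B S† A = A S† B`. Hence
`ran M ⊆ ran A ∩ ran B` and `ran M* ⊆ ran A* ∩ ran B*`, so `Q M = M` and `M P = M`. For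
`X = P (A† + B†) Q` one then computes `M X = (B S† + A S†) Q = Q` and
`X M = P (S† B + S† A) = P`, and as `P`, `Q` are orthogonal projections these two identities
are the four Penrose equations for `X`.
-/

open Matrix
open scoped Classical

/-- Moore-Penrose inverse of a complex matrix. -/
noncomputable def mp {m n : Type*} [Fintype m] [Fintype n] (A : Matrix m n ℂ) : Matrix n m ℂ :=
  if h : ∃ X : Matrix n m ℂ,
      A * X * A = A ∧ X * A * X = X ∧ (A * X)ᴴ = A * X ∧ (X * A)ᴴ = X * A
  then h.choose else 0

/-- `P` is the matrix of the orthogonal projection of `ℂ^q` onto the subspace `U`: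
it is Hermitian, idempotent, and has column space `U`. -/
def IsOrthProj {q : ℕ} (P : Matrix (Fin q) (Fin q) ℂ) (U : Submodule ℂ (Fin q → ℂ)) : Prop :=
  P.IsHermitian ∧ P * P = P ∧ LinearMap.range P.mulVecLin = U

namespace Matrix

section RangeKer

variable {R : Type*} [CommRing R] {l m n : Type*} [Fintype m] [Fintype n]

theorem range_mulVecLin_mul_le (M : Matrix l m R) (N : Matrix m n R) :
    LinearMap.range (M * N).mulVecLin ≤ LinearMap.range M.mulVecLin := by
  rw [mulVecLin_mul]
  exact LinearMap.range_comp_le_range _ _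

theorem exists_eq_mul_of_range_mulVecLin_le {M : Matrix l n R} {N : Matrix l m R}
    (h : LinearMap.range M.mulVecLin ≤ LinearMap.range N.mulVecLin) :
    ∃ C : Matrix m n R, M = N * C := by
  choose c hc using fun j => h (LinearMap.mem_range_self M.mulVecLin (Pi.single j 1))
  refine ⟨(of c)ᵀ, ext_of_mulVec_single fun j => ?_⟩
  rw [← mulVec_mulVec, mulVec_single_one (of c)ᵀ]
  exact (hc j).symm

theorem ker_mulVecLin_le_of_range_conjTranspose_le [StarRing R] [Fintype l] {C : Matrix l n R}
    {T : Matrix m n R}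
    (h : LinearMap.range Cᴴ.mulVecLin ≤ LinearMap.range Tᴴ.mulVecLin) :
    LinearMap.ker T.mulVecLin ≤ LinearMap.ker C.mulVecLin := by
  obtain ⟨D, hD⟩ := exists_eq_mul_of_range_mulVecLin_le h
  rw [← conjTranspose_conjTranspose C, hD, conjTranspose_mul, conjTranspose_conjTranspose,
    mulVecLin_mul]
  exact LinearMap.ker_le_ker_comp _ _

variable {T : Matrix m n R} {Y : Matrix n m R}

theorem mul_mul_eq_of_range_le [Fintype l] (hY : T * Y * T = T) {C : Matrix m l R}
    (h : LinearMap.range C.mulVecLin ≤ LinearMap.range T.mulVecLin) : T * Y * C = C := by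
  obtain ⟨D, rfl⟩ := exists_eq_mul_of_range_mulVecLin_le h
  rw [← Matrix.mul_assoc, hY]

theorem mul_mul_eq_of_ker_le (hY : T * Y * T = T) {C : Matrix l n R}
    (h : LinearMap.ker T.mulVecLin ≤ LinearMap.ker C.mulVecLin) : C * Y * T = C := by
  refine ext_of_mulVec_single fun j => ?_
  have hT : T *ᵥ ((Y * T) *ᵥ Pi.single j 1 - Pi.single j 1) = 0 := by
    rw [mulVec_sub, mulVec_mulVec, ← Matrix.mul_assoc, hY, sub_self]
  have hC := h hT
  rwa [LinearMap.mem_ker, mulVecLin_apply, mulVec_sub, mulVec_mulVec, sub_eq_zero,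
    ← Matrix.mul_assoc] at hC

end RangeKer

theorem IsHermitian.exists_commute_generalizedInverse {n : Type*} [Fintype n]
    {H : Matrix n n ℂ} (hH : H.IsHermitian) :
    ∃ G : Matrix n n ℂ, H * G * H = H ∧ G * H * G = G ∧ G.IsHermitian ∧ Commute G H := by
  -- The spectrum is finite, so `x ↦ x⁻¹` (with `0⁻¹ = 0`) is admissible in the calculus.
  have hcont (f : ℝ → ℝ) : ContinuousOn f (spectrum ℝ H) :=
    H.finite_real_spectrum.continuousOn _
  have : IsSelfAdjoint H := hH
  refine ⟨cfc (·⁻¹ : ℝ → ℝ) H, ?_, ?_, cfc_predicate _ H, ?_⟩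
  · calc H * cfc (·⁻¹) H * H = cfc (fun x : ℝ => x * x⁻¹ * x) H := by
          rw [cfc_mul _ _ H (hcont _) (hcont _), cfc_mul _ _ H (hcont _) (hcont _), cfc_id' ℝ H]
      _ = H := by simp only [mul_inv_mul_cancel, cfc_id' ℝ H]
  · calc cfc (·⁻¹) H * H * cfc (·⁻¹) H
        = cfc (fun x : ℝ => x⁻¹ * x⁻¹⁻¹ * x⁻¹) H := by
          simp only [inv_inv]
          rw [cfc_mul _ _ H (hcont _) (hcont _), cfc_mul _ _ H (hcont _) (hcont _), cfc_id' ℝ H]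
      _ = cfc (·⁻¹) H := by simp only [mul_inv_mul_cancel]
  · simpa only [cfc_id' ℝ H] using cfc_commute_cfc (·⁻¹ : ℝ → ℝ) (fun x => x) H

end Matrix

section MoorePenrose

variable {m n : Type*} [Fintype m] [Fintype n]

structure IsMoorePenroseInverse (A : Matrix m n ℂ) (X : Matrix n m ℂ) : Prop where
  mul_mul_self : A * X * A = A
  mul_self_mul : X * A * X = X
  isHermitian_self_mul : (A * X).IsHermitian
  isHermitian_mul_self : (X * A).IsHermitian

open scoped ComplexOrder in
theorem exists_isMoorePenroseInverse (A : Matrix m n ℂ) : ∃ X, IsMoorePenroseInverse A X := by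
  obtain ⟨G, hHGH, hGHG, hG, hGH⟩ :=
    (isHermitian_conjTranspose_mul_self A).exists_commute_generalizedInverse
  have hAGH : A * G * (Aᴴ * A) = A :=
    mul_mul_eq_of_ker_le hHGH fun v hv => (conjTranspose_mul_self_mulVec_eq_zero A v).mp hv
  -- `A† = (A*A)^+ A*`
  refine ⟨G * Aᴴ, ⟨?_, ?_, ?_, ?_⟩⟩
  · conv_rhs => rw [← hAGH]
    simp only [Matrix.mul_assoc]
  · conv_rhs => rw [← hGHG]
    simp only [Matrix.mul_assoc]
  · rw [IsHermitian, conjTranspose_mul, conjTranspose_mul, conjTranspose_conjTranspose, hG.eq,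
      Matrix.mul_assoc]
  · rw [IsHermitian, Matrix.mul_assoc, conjTranspose_mul,
      (isHermitian_conjTranspose_mul_self A).eq, hG.eq, hGH.eq]

theorem IsMoorePenroseInverse.unique {A : Matrix m n ℂ} {X Y : Matrix n m ℂ}
    (hX : IsMoorePenroseInverse A X) (hY : IsMoorePenroseInverse A Y) : X = Y := by
  have hAY : Aᴴ * (Yᴴ * Aᴴ) = Aᴴ := by
    rw [← conjTranspose_mul, ← conjTranspose_mul, hY.mul_mul_self]
  have hXA : Aᴴ * Xᴴ * Aᴴ = Aᴴ := by
    rw [← conjTranspose_mul, ← conjTranspose_mul, ← Matrix.mul_assoc, hX.mul_mul_self]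
  calc X = X * (A * X)ᴴ := by
        rw [hX.isHermitian_self_mul.eq, ← Matrix.mul_assoc, hX.mul_self_mul]
    _ = X * (A * X)ᴴ * (A * Y)ᴴ := by simp only [conjTranspose_mul, Matrix.mul_assoc, hAY]
    _ = X * A * Y := by
      rw [hX.isHermitian_self_mul.eq, hY.isHermitian_self_mul.eq, ← Matrix.mul_assoc X A X,
        hX.mul_self_mul, Matrix.mul_assoc]
    _ = (X * A)ᴴ * (Y * A)ᴴ * Y := by
      rw [hX.isHermitian_mul_self.eq, hY.isHermitian_mul_self.eq, Matrix.mul_assoc (X * A),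
        hY.mul_self_mul]
    _ = (Y * A)ᴴ * Y := by simp only [conjTranspose_mul, ← Matrix.mul_assoc, hXA]
    _ = Y := by rw [hY.isHermitian_mul_self.eq, hY.mul_self_mul]

theorem mp_spec (A : Matrix m n ℂ) : IsMoorePenroseInverse A (mp A) := by
  obtain ⟨X, hX⟩ := exists_isMoorePenroseInverse A
  have h : ∃ X : Matrix n m ℂ,
      A * X * A = A ∧ X * A * X = X ∧ (A * X)ᴴ = A * X ∧ (X * A)ᴴ = X * A :=
    ⟨X, hX.1, hX.2, hX.3, hX.4⟩
  obtain ⟨h1, h2, h3, h4⟩ := h.choose_spec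
  rw [mp, dif_pos h]
  exact ⟨h1, h2, h3, h4⟩

theorem IsMoorePenroseInverse.mp_eq {A : Matrix m n ℂ} {X : Matrix n m ℂ}
    (h : IsMoorePenroseInverse A X) : mp A = X :=
  (mp_spec A).unique h

end MoorePenrose

section ParallelSum

variable {l m n : Type*} [Fintype m] [Fintype n]

theorem mul_mp_mul_of_range_le [Fintype l] {T : Matrix m n ℂ} {C : Matrix m l ℂ}
    (h : LinearMap.range C.mulVecLin ≤ LinearMap.range T.mulVecLin) : T * mp T * C = C :=
  mul_mul_eq_of_range_le (mp_spec T).mul_mul_self h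

theorem mul_mp_mul_of_ker_le {T : Matrix m n ℂ} {C : Matrix l n ℂ}
    (h : LinearMap.ker T.mulVecLin ≤ LinearMap.ker C.mulVecLin) : C * mp T * T = C :=
  mul_mul_eq_of_ker_le (mp_spec T).mul_mul_self h

noncomputable def parallelSum (A B : Matrix m n ℂ) : Matrix m n ℂ :=
  A * mp (A + B) * B

variable {A B : Matrix m n ℂ}

theorem parallelSum_comm
    (hA1 : LinearMap.range A.mulVecLin ≤ LinearMap.range (A + B).mulVecLin)
    (hA2 : LinearMap.ker (A + B).mulVecLin ≤ LinearMap.ker A.mulVecLin) :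
    parallelSum B A = parallelSum A B := by
  have hS : (A + B) * mp (A + B) * A = A := mul_mp_mul_of_range_le hA1
  have hS' : A * mp (A + B) * (A + B) = A := mul_mp_mul_of_ker_le hA2
  rw [parallelSum, parallelSum, add_comm B A]
  calc B * mp (A + B) * A = (A + B) * mp (A + B) * A - A * mp (A + B) * A := by
        rw [Matrix.add_mul, Matrix.add_mul]; abel
    _ = A * mp (A + B) * (A + B) - A * mp (A + B) * A := by rw [hS, hS']
    _ = A * mp (A + B) * B := by rw [Matrix.mul_add]; abel

theorem range_parallelSum_le
    (hA1 : LinearMap.range A.mulVecLin ≤ LinearMap.range (A + B).mulVecLin)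
    (hA2 : LinearMap.ker (A + B).mulVecLin ≤ LinearMap.ker A.mulVecLin) :
    LinearMap.range (parallelSum A B).mulVecLin ≤
      LinearMap.range A.mulVecLin ⊓ LinearMap.range B.mulVecLin := by
  refine le_inf ?_ ?_
  · rw [parallelSum, Matrix.mul_assoc]
    exact range_mulVecLin_mul_le _ _
  · rw [← parallelSum_comm hA1 hA2, parallelSum, Matrix.mul_assoc]
    exact range_mulVecLin_mul_le _ _

theorem range_conjTranspose_parallelSum_le
    (hA1 : LinearMap.range A.mulVecLin ≤ LinearMap.range (A + B).mulVecLin)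
    (hA2 : LinearMap.ker (A + B).mulVecLin ≤ LinearMap.ker A.mulVecLin) :
    LinearMap.range (parallelSum A B)ᴴ.mulVecLin ≤
      LinearMap.range Aᴴ.mulVecLin ⊓ LinearMap.range Bᴴ.mulVecLin := by
  refine le_inf ?_ ?_
  · rw [← parallelSum_comm hA1 hA2, parallelSum, conjTranspose_mul]
    exact range_mulVecLin_mul_le _ _
  · rw [parallelSum, conjTranspose_mul]
    exact range_mulVecLin_mul_le _ _

end ParallelSum

namespace IsOrthProj

variable {l : Type*} [Fintype l] {q : ℕ} {P : Matrix (Fin q) (Fin q) ℂ}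
  {U : Submodule ℂ (Fin q → ℂ)}

theorem mul_eq_of_range_le (hP : IsOrthProj P U) {C : Matrix (Fin q) l ℂ}
    (h : LinearMap.range C.mulVecLin ≤ U) : P * C = C := by
  obtain ⟨D, rfl⟩ := exists_eq_mul_of_range_mulVecLin_le (h.trans hP.2.2.ge)
  rw [← Matrix.mul_assoc, hP.2.1]

theorem mul_eq_of_range_conjTranspose_le (hP : IsOrthProj P U) {C : Matrix l (Fin q) ℂ}
    (h : LinearMap.range Cᴴ.mulVecLin ≤ U) : C * P = C := by
  simpa only [conjTranspose_mul, hP.1.eq, conjTranspose_conjTranspose] using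
    congrArg conjTranspose (hP.mul_eq_of_range_le h)

theorem ker_mulVecLin_le (hP : IsOrthProj P U) {T : Matrix l (Fin q) ℂ}
    (h : U ≤ LinearMap.range Tᴴ.mulVecLin) :
    LinearMap.ker T.mulVecLin ≤ LinearMap.ker P.mulVecLin :=
  ker_mulVecLin_le_of_range_conjTranspose_le (by rw [hP.1.eq, hP.2.2]; exact h)

end IsOrthProj

section ParallelSumInverse

variable {q : ℕ} {A B P Q : Matrix (Fin q) (Fin q) ℂ}

theorem parallelSum_mul_eq
    (hA1 : LinearMap.range A.mulVecLin ≤ LinearMap.range (A + B).mulVecLin)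
    (hA2 : LinearMap.ker (A + B).mulVecLin ≤ LinearMap.ker A.mulVecLin)
    (hP : IsOrthProj P (LinearMap.range Aᴴ.mulVecLin ⊓ LinearMap.range Bᴴ.mulVecLin))
    (hQ : IsOrthProj Q (LinearMap.range A.mulVecLin ⊓ LinearMap.range B.mulVecLin)) :
    parallelSum A B * (P * (mp A + mp B) * Q) = Q := by
  have hMP : parallelSum A B * P = parallelSum A B :=
    hP.mul_eq_of_range_conjTranspose_le (range_conjTranspose_parallelSum_le hA1 hA2)
  have hAQ : A * mp A * Q = Q := mul_mp_mul_of_range_le (hQ.2.2.trans_le inf_le_left)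
  have hBQ : B * mp B * Q = Q := mul_mp_mul_of_range_le (hQ.2.2.trans_le inf_le_right)
  have hSQ : (A + B) * mp (A + B) * Q = Q :=
    mul_mp_mul_of_range_le ((hQ.2.2.trans_le inf_le_left).trans hA1)
  calc parallelSum A B * (P * (mp A + mp B) * Q)
      = parallelSum A B * mp A * Q + parallelSum A B * mp B * Q := by
        rw [← Matrix.mul_assoc, ← Matrix.mul_assoc, hMP, Matrix.mul_add, Matrix.add_mul]
    _ = B * mp (A + B) * (A * mp A * Q) + A * mp (A + B) * (B * mp B * Q) := by
        nth_rewrite 1 [← parallelSum_comm hA1 hA2]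
        simp only [parallelSum, add_comm B A, Matrix.mul_assoc]
    _ = Q := by rw [hAQ, hBQ, ← Matrix.add_mul, ← Matrix.add_mul, add_comm B A, hSQ]

theorem mul_parallelSum_eq
    (hA1 : LinearMap.range A.mulVecLin ≤ LinearMap.range (A + B).mulVecLin)
    (hA2 : LinearMap.ker (A + B).mulVecLin ≤ LinearMap.ker A.mulVecLin)
    (hP : IsOrthProj P (LinearMap.range Aᴴ.mulVecLin ⊓ LinearMap.range Bᴴ.mulVecLin))
    (hQ : IsOrthProj Q (LinearMap.range A.mulVecLin ⊓ LinearMap.range B.mulVecLin)) :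
    P * (mp A + mp B) * Q * parallelSum A B = P := by
  have hQM : Q * parallelSum A B = parallelSum A B :=
    hQ.mul_eq_of_range_le (range_parallelSum_le hA1 hA2)
  have hPA : P * mp A * A = P := mul_mp_mul_of_ker_le (hP.ker_mulVecLin_le inf_le_left)
  have hPB : P * mp B * B = P := mul_mp_mul_of_ker_le (hP.ker_mulVecLin_le inf_le_right)
  have hPS : P * mp (A + B) * (A + B) = P :=
    mul_mp_mul_of_ker_le (hA2.trans (hP.ker_mulVecLin_le inf_le_left))
  calc P * (mp A + mp B) * Q * parallelSum A B
      = P * mp A * parallelSum A B + P * mp B * parallelSum A B := by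
        rw [Matrix.mul_assoc _ Q, hQM, Matrix.mul_add, Matrix.add_mul]
    _ = P * mp A * A * (mp (A + B) * B) + P * mp B * B * (mp (A + B) * A) := by
        nth_rewrite 2 [← parallelSum_comm hA1 hA2]
        simp only [parallelSum, add_comm B A, Matrix.mul_assoc]
    _ = P := by
        rw [hPA, hPB, ← Matrix.mul_add, ← Matrix.mul_add, add_comm B A, ← Matrix.mul_assoc,
          hPS]

theorem mp_parallelSum
    (hA1 : LinearMap.range A.mulVecLin ≤ LinearMap.range (A + B).mulVecLin)
    (hA2 : LinearMap.ker (A + B).mulVecLin ≤ LinearMap.ker A.mulVecLin)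
    (hP : IsOrthProj P (LinearMap.range Aᴴ.mulVecLin ⊓ LinearMap.range Bᴴ.mulVecLin))
    (hQ : IsOrthProj Q (LinearMap.range A.mulVecLin ⊓ LinearMap.range B.mulVecLin)) :
    mp (parallelSum A B) = P * (mp A + mp B) * Q := by
  have hMX := parallelSum_mul_eq hA1 hA2 hP hQ
  have hXM := mul_parallelSum_eq hA1 hA2 hP hQ
  refine IsMoorePenroseInverse.mp_eq ⟨?_, ?_, ?_, ?_⟩
  · rw [hMX]
    exact hQ.mul_eq_of_range_le (range_parallelSum_le hA1 hA2)
  · rw [hXM, ← Matrix.mul_assoc, ← Matrix.mul_assoc, hP.2.1]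
  · rw [hMX]
    exact hQ.1
  · rw [hXM]
    exact hP.1

end ParallelSumInverse

theorem stmt_15_general (q : ℕ) (A B : Matrix (Fin q) (Fin q) ℂ)
    (hA1 : LinearMap.range A.mulVecLin ≤ LinearMap.range (A + B).mulVecLin)
    (hA2 : LinearMap.ker (A + B).mulVecLin ≤ LinearMap.ker A.mulVecLin)
    (P Q : Matrix (Fin q) (Fin q) ℂ)
    (hP : IsOrthProj P (LinearMap.range Aᴴ.mulVecLin ⊓ LinearMap.range Bᴴ.mulVecLin))
    (hQ : IsOrthProj Q (LinearMap.range A.mulVecLin ⊓ LinearMap.range B.mulVecLin)) :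
    mp (A * mp (A + B) * B) = P * (mp A + mp B) * Q :=
  mp_parallelSum hA1 hA2 hP hQ

/-- under the parallel-summability conditions on `(A,B)` (and symmetrically on
`(B,A)`), `(A : B)† = P (A† + B†) Q` where `P` is the orthogonal projection onto
`ran(A*) ∩ ran(B*)` and `Q` the one onto `ran(A) ∩ ran(B)`. -/
theorem stmt_15 (q : ℕ) (A B : Matrix (Fin q) (Fin q) ℂ)
    (hA1 : LinearMap.range A.mulVecLin ≤ LinearMap.range (A + B).mulVecLin)
    (hA2 : LinearMap.ker (A + B).mulVecLin ≤ LinearMap.ker A.mulVecLin)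
    (hB1 : LinearMap.range B.mulVecLin ≤ LinearMap.range (A + B).mulVecLin)
    (hB2 : LinearMap.ker (A + B).mulVecLin ≤ LinearMap.ker B.mulVecLin)
    (P Q : Matrix (Fin q) (Fin q) ℂ)
    (hP : IsOrthProj P (LinearMap.range Aᴴ.mulVecLin ⊓ LinearMap.range Bᴴ.mulVecLin))
    (hQ : IsOrthProj Q (LinearMap.range A.mulVecLin ⊓ LinearMap.range B.mulVecLin)) :
    mp (A * mp (A + B) * B) = P * (mp A + mp B) * Q :=
  stmt_15_general q A B hA1 hA2 P Q hP hQ
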